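/- arXiv:2511.15135 — 2 statements merged into one kernel-verified Lean document; each statement's English description precedes it below -/
import Mathlib

section
/- Let X be a ℚ-valued discrete random variable with g(a) := H[X - a X'] - H[X], where X' is an independent copy of X. Then for any a₁, a₂ ∈ ℚ one has g(a₁ + a₂) ≤ g(a₁) + g(a₂) + g(1), where g(1) = d[X;X] is the entropic Ruzsa self-distance. -/
open scoped Classical
open Finset

/-- Probability of an event under a weight function on a finite sample space. -/
noncomputable def prb {Ω : Type*} [Fintype Ω] (μ : Ω → ℝ) (E : Set Ω) : ℝ :=
  ∑ ω ∈ Finset.univ.filter (fun ω => ω ∈ E), μ ω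

/-- `μ` is a probability mass function on the finite space `Ω`. -/
def IsProb {Ω : Type*} [Fintype Ω] (μ : Ω → ℝ) : Prop :=
  (∀ ω, 0 ≤ μ ω) ∧ ∑ ω, μ ω = 1

/-- Shannon entropy of a random variable `X` on a finite probability space. -/
noncomputable def ent {Ω S : Type*} [Fintype Ω] (μ : Ω → ℝ) (X : Ω → S) : ℝ :=
  ∑ s ∈ Finset.univ.image X, Real.negMulLog (prb μ {ω | X ω = s})

/-- Independence of two random variables. -/
def IndepRV {Ω S T : Type*} [Fintype Ω] (μ : Ω → ℝ) (X : Ω → S) (Y : Ω → T) : Prop :=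
  ∀ x y, prb μ {ω | X ω = x ∧ Y ω = y} = prb μ {ω | X ω = x} * prb μ {ω | Y ω = y}

/-- Conditional Shannon entropy `H[X|Z] = H[X,Z] - H[Z]`. -/
noncomputable def condEnt {Ω S T : Type*} [Fintype Ω] (μ : Ω → ℝ) (X : Ω → S) (Z : Ω → T) : ℝ :=
  ent μ (fun ω => (X ω, Z ω)) - ent μ Z

/-- Entropic Ruzsa distance `d[X;Y] = H[X'-Y'] - H[X]/2 - H[Y]/2`,
realized on the product space so that the copies are independent. -/
noncomputable def rdist {Ω₁ Ω₂ : Type*} [Fintype Ω₁] [Fintype Ω₂]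
    (μ₁ : Ω₁ → ℝ) (μ₂ : Ω₂ → ℝ) (X : Ω₁ → ℚ) (Y : Ω₂ → ℚ) : ℝ :=
  ent (fun p : Ω₁ × Ω₂ => μ₁ p.1 * μ₂ p.2) (fun p => X p.1 - Y p.2)
    - ent μ₁ X / 2 - ent μ₂ Y / 2

/-- The quantity `g(a) = H[X - a X'] - H[X]`, where `X'` is an independent copy of `X`. -/
noncomputable def gfun {Ω : Type*} [Fintype Ω] (μ : Ω → ℝ) (X : Ω → ℚ) (a : ℚ) : ℝ :=
  ent (fun p : Ω × Ω => μ p.1 * μ p.2) (fun p => X p.1 - a * X p.2) - ent μ X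

/-- Projection `π_r(x,y) = x + r y` for a finite slope `some r`, and `π_∞(x,y) = y`. -/
noncomputable def pSlope : Option ℚ → ℚ × ℚ → ℚ
  | none, p => p.2
  | some r, p => p.1 + r * p.2

/-- The measure `μ` conditioned on the event `Z = z`. -/
noncomputable def condMeasure {Ω T : Type*} [Fintype Ω] (μ : Ω → ℝ) (Z : Ω → T) (z : T) :
    Ω → ℝ :=
  fun ω => if Z ω = z then μ ω / prb μ {ω' | Z ω' = z} else 0

/-- `E_{Z=z} d[X|Z=z ; X|Z=z]`, the averaged conditional entropic Ruzsa self-distance. -/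
noncomputable def condSelfDoubling {Ω T : Type*} [Fintype Ω] (μ : Ω → ℝ)
    (X : Ω → ℚ) (Z : Ω → T) : ℝ :=
  ∑ z ∈ Finset.univ.image Z, prb μ {ω | Z ω = z} *
    rdist (condMeasure μ Z z) (condMeasure μ Z z) X X

/-!
Realise independent copies `X₁, X₂, X₃` of `X` on products of the sample space. For `a₂ ≠ 0`
the improved Ruzsa triangle inequality `H[A - B] + H[C] ≤ H[A - C] + H[B - C]` (with `C`
independent of `(A, B)`), applied to `A = X₁ - a₁X₂`, `B = a₂X₂`, `C = a₂X₃`, gives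
`H[X₁ - (a₁ + a₂)X₂] + H[X] ≤ H[X₁ - a₁X₂ - a₂X₃] + H[X₁ - X₂]`, since scaling by `a₂` does not
change entropy. The Kaimanovich–Vershik–Madiman inequality bounds
`H[X₁ - a₁X₂ - a₂X₃] + H[X] ≤ H[X₁ - a₁X₂] + H[X₁ - a₂X₃]`, and the sum of the two is the claim.
For `a₂ = 0` the claim is `0 ≤ g(1)`, i.e. `H[X] ≤ H[X₁ - X₂]`.

Both inequalities are instances of submodularity `H[U,V,W] + H[W] ≤ H[U,W] + H[V,W]`, which is
Gibbs' inequality `log x ≤ x - 1` applied on each fibre of `W`.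
-/

local notation:100 ν₁ " ⊗ₚ " ν₂ => fun p => ν₁ (Prod.fst p) * ν₂ (Prod.snd p)

open Real

section Basic

variable {Ω Ω' Ω₁ Ω₂ S T : Type*} [Fintype Ω] [Fintype Ω'] [Fintype Ω₁] [Fintype Ω₂]
  {ν : Ω → ℝ}

lemma prb_nonneg (hν : ∀ ω, 0 ≤ ν ω) (E : Set Ω) : 0 ≤ prb ν E :=
  sum_nonneg fun ω _ => hν ω

lemma prb_univ (ν : Ω → ℝ) : prb ν Set.univ = ∑ ω, ν ω := by
  simp [prb]

lemma prb_eq_sum_prb_inter (ν : Ω → ℝ) (X : Ω → S) (E : Set Ω) :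
    prb ν E = ∑ s ∈ univ.image X, prb ν (E ∩ {ω | X ω = s}) := by
  simp only [prb, Set.mem_inter_iff, Set.mem_ofPred_eq, ← filter_filter]
  exact (sum_fiberwise_of_maps_to (fun ω _ => mem_image_of_mem X (mem_univ ω)) _).symm

lemma sum_prb_image_eq_sum (ν : Ω → ℝ) (X : Ω → S) :
    ∑ s ∈ univ.image X, prb ν {ω | X ω = s} = ∑ ω, ν ω := by
  simpa [prb_univ] using (prb_eq_sum_prb_inter ν X Set.univ).symm

lemma apply_mem_image_univ (X : Ω → S) (ω : Ω) : X ω ∈ univ.image X :=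
  mem_image_of_mem X (mem_univ ω)

lemma mk_mem_image_univ_product (U : Ω₁ → S) (V : Ω₂ → T) (a : Ω₁) (b : Ω₂) :
    (U a, V b) ∈ univ.image U ×ˢ univ.image V :=
  mem_product.2 ⟨apply_mem_image_univ U a, apply_mem_image_univ V b⟩

lemma ent_eq_sum_of_forall_mem (ν : Ω → ℝ) (X : Ω → S) {A : Finset S} (h : ∀ ω, X ω ∈ A) :
    ent ν X = ∑ s ∈ A, negMulLog (prb ν {ω | X ω = s}) := by
  refine sum_subset (fun s hs => ?_) fun s _ hs => ?_
  · obtain ⟨ω, -, rfl⟩ := mem_image.1 hs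
    exact h ω
  have : {ω | X ω = s} = ∅ := by
    ext ω
    simp only [Set.mem_ofPred_eq, Set.mem_empty_iff_false, iff_false]
    exact fun hω => hs (hω ▸ apply_mem_image_univ X ω)
  simp [this, prb]

lemma ent_eq_of_prb_eq {ν' : Ω' → ℝ} {X : Ω → S} {Y : Ω' → S}
    (h : ∀ s, prb ν {ω | X ω = s} = prb ν' {ω | Y ω = s}) : ent ν X = ent ν' Y := by
  rw [ent_eq_sum_of_forall_mem ν X fun ω =>
      mem_union_left (univ.image Y) (apply_mem_image_univ X ω),
    ent_eq_sum_of_forall_mem ν' Y fun ω =>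
      mem_union_right (univ.image X) (apply_mem_image_univ Y ω)]
  simp only [h]

lemma ent_comp_of_injOn (ν : Ω → ℝ) {F : S → T} {X : Ω → S} (hF : Set.InjOn F (Set.range X)) :
    ent ν (fun ω => F (X ω)) = ent ν X := by
  have hF' : Set.InjOn F ↑(univ.image X) := by simpa using hF
  rw [ent, show univ.image (fun ω => F (X ω)) = (univ.image X).image F from
    (image_image ..).symm, sum_image hF']
  refine sum_congr rfl fun s hs => ?_
  congr 2
  ext ω
  exact hF'.eq_iff (apply_mem_image_univ X ω) hs

lemma ent_eq_of_comp (ν : Ω → ℝ) {X : Ω → S} {Y : Ω → T} (f : S → T) (g : T → S)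
    (hf : ∀ ω, Y ω = f (X ω)) (hg : ∀ ω, X ω = g (Y ω)) : ent ν X = ent ν Y := by
  obtain rfl : Y = fun ω => f (X ω) := funext hf
  refine (ent_comp_of_injOn ν ?_).symm
  rintro _ ⟨ω, rfl⟩ _ ⟨ω', rfl⟩ h
  rw [hg ω, hg ω', hf, hf, h]

end Basic

section Product

variable {Ω Ω' Ω₁ Ω₁' Ω₂ S T : Type*} [Fintype Ω] [Fintype Ω'] [Fintype Ω₁] [Fintype Ω₁']
  [Fintype Ω₂] {ν₁ : Ω₁ → ℝ} {ν₂ : Ω₂ → ℝ}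

lemma IsProb.prod (h₁ : IsProb ν₁) (h₂ : IsProb ν₂) : IsProb (ν₁ ⊗ₚ ν₂) :=
  ⟨fun p => mul_nonneg (h₁.1 _) (h₂.1 _), by
    rw [Fintype.sum_prod_type, ← sum_mul_sum, h₁.2, h₂.2, one_mul]⟩

lemma prb_prod (ν₁ : Ω₁ → ℝ) (ν₂ : Ω₂ → ℝ) (A : Set Ω₁) (B : Set Ω₂) :
    prb (ν₁ ⊗ₚ ν₂) (A ×ˢ B) = prb ν₁ A * prb ν₂ B := by
  simp only [prb, sum_mul_sum, ← sum_product', Set.mem_prod]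
  rw [← filter_product]
  rfl

lemma prb_prod_eq_sum (ν₁ : Ω₁ → ℝ) (ν₂ : Ω₂ → ℝ) (E : Set (Ω₁ × Ω₂)) :
    prb (ν₁ ⊗ₚ ν₂) E = ∑ b, ν₂ b * prb ν₁ {a | (a, b) ∈ E} := by
  simp only [prb, sum_filter, mul_sum, Fintype.sum_prod_type_right, Set.mem_ofPred_eq]
  refine sum_congr rfl fun b _ => sum_congr rfl fun a _ => ?_
  split_ifs <;> ring

def PrbPreserving (ν : Ω → ℝ) (ν' : Ω' → ℝ) (σ : Ω → Ω') : Prop :=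
  ∀ E : Set Ω', prb ν (σ ⁻¹' E) = prb ν' E

lemma PrbPreserving.ent_comp {ν : Ω → ℝ} {ν' : Ω' → ℝ} {σ : Ω → Ω'}
    (h : PrbPreserving ν ν' σ) (W : Ω' → S) : ent ν (fun ω => W (σ ω)) = ent ν' W :=
  ent_eq_of_prb_eq fun s => h {ω' | W ω' = s}

lemma prbPreserving_fst (h₂ : ∑ b, ν₂ b = 1) : PrbPreserving (ν₁ ⊗ₚ ν₂) ν₁ Prod.fst :=
  fun E => by rw [← Set.prod_univ, prb_prod, prb_univ, h₂, mul_one]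

lemma prbPreserving_snd (h₁ : ∑ a, ν₁ a = 1) : PrbPreserving (ν₁ ⊗ₚ ν₂) ν₂ Prod.snd :=
  fun E => by rw [← Set.univ_prod, prb_prod, prb_univ, h₁, one_mul]

lemma PrbPreserving.prodMap_id {ν₁' : Ω₁' → ℝ} {σ : Ω₁ → Ω₁'} (h : PrbPreserving ν₁ ν₁' σ) :
    PrbPreserving (ν₁ ⊗ₚ ν₂) (ν₁' ⊗ₚ ν₂) (Prod.map σ id) := fun E => by
  simp only [prb_prod_eq_sum]
  exact sum_congr rfl fun b _ => congrArg (ν₂ b * ·) (h {a | (a, b) ∈ E})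

lemma ent_comp_fst (h₂ : ∑ b, ν₂ b = 1) (W : Ω₁ → S) :
    ent (ν₁ ⊗ₚ ν₂) (fun p => W p.1) = ent ν₁ W :=
  (prbPreserving_fst h₂).ent_comp W

lemma ent_comp_snd (h₁ : ∑ a, ν₁ a = 1) (W : Ω₂ → S) :
    ent (ν₁ ⊗ₚ ν₂) (fun p => W p.2) = ent ν₂ W :=
  (prbPreserving_snd h₁).ent_comp W

lemma ent_prod_mk (h₁ : ∑ a, ν₁ a = 1) (h₂ : ∑ b, ν₂ b = 1) (U : Ω₁ → S) (V : Ω₂ → T) :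
    ent (ν₁ ⊗ₚ ν₂) (fun p => (U p.1, V p.2)) = ent ν₁ U + ent ν₂ V := by
  have hfac : ∀ s t, prb (ν₁ ⊗ₚ ν₂) {p | (U p.1, V p.2) = (s, t)}
      = prb ν₁ {a | U a = s} * prb ν₂ {b | V b = t} := fun s t => by
    rw [← prb_prod]
    congr 1
    ext p
    simp [Prod.ext_iff]
  rw [ent_eq_sum_of_forall_mem _ (fun p : Ω₁ × Ω₂ => (U p.1, V p.2)) fun p =>
    mk_mem_image_univ_product U V p.1 p.2]
  simp only [sum_product, hfac, negMulLog_mul, sum_add_distrib, ← sum_mul, ← mul_sum,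
    sum_prb_image_eq_sum, h₁, h₂, one_mul]
  rfl

end Product

section Gibbs

lemma sub_mul_div_le_mul_log {p P Q c : ℝ} (hp : 0 ≤ p) (hP : p ≤ P) (hQ : p ≤ Q)
    (hc : p ≤ c) : p - P * Q / c ≤ p * (log p + log c - log P - log Q) := by
  rcases hp.eq_or_lt with rfl | hp
  · simp only [zero_sub, zero_mul, neg_nonpos]
    exact div_nonneg (mul_nonneg hP hQ) hc
  have hP' : 0 < P := hp.trans_le hP
  have hQ' : 0 < Q := hp.trans_le hQ
  have hc' : 0 < c := hp.trans_le hc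
  have hlog := log_le_sub_one_of_pos (show 0 < P * Q / (p * c) by positivity)
  rw [log_div (by positivity) (by positivity), log_mul hP'.ne' hQ'.ne', log_mul hp.ne' hc'.ne']
    at hlog
  have hid : p * (P * Q / (p * c) - 1) = P * Q / c - p := by field_simp
  nlinarith [mul_le_mul_of_nonneg_left hlog hp.le]

variable {S T : Type*}

-- `I[U : V] ≥ 0` for a joint law given by unnormalised weights `p s t`.
lemma sum_negMulLog_add_negMulLog_sum_le (A : Finset S) (B : Finset T) (p : S → T → ℝ)
    (hp : ∀ s t, 0 ≤ p s t) :
    ∑ s ∈ A, ∑ t ∈ B, negMulLog (p s t) + negMulLog (∑ s ∈ A, ∑ t ∈ B, p s t)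
      ≤ ∑ s ∈ A, negMulLog (∑ t ∈ B, p s t) + ∑ t ∈ B, negMulLog (∑ s ∈ A, p s t) := by
  set P : S → ℝ := fun s => ∑ t ∈ B, p s t
  set Q : T → ℝ := fun t => ∑ s ∈ A, p s t
  set c := ∑ s ∈ A, P s
  have hPQ : ∑ s ∈ A, ∑ t ∈ B, P s * Q t / c = c := by
    have hQ : ∑ t ∈ B, Q t = c := sum_comm
    simp_rw [← sum_div, ← mul_sum, ← sum_mul, hQ]
    exact mul_self_div_self c
  have hgibbs : 0 ≤ ∑ s ∈ A, ∑ t ∈ B, p s t * (log (p s t) + log c - log (P s) - log (Q t)) := by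
    calc (0 : ℝ) = ∑ s ∈ A, ∑ t ∈ B, (p s t - P s * Q t / c) := by
          simp_rw [sum_sub_distrib, hPQ]; exact (sub_self c).symm
      _ ≤ _ := sum_le_sum fun s hs => sum_le_sum fun t ht =>
          sub_mul_div_le_mul_log (hp s t) (single_le_sum (fun t _ => hp s t) ht)
            (single_le_sum (fun s _ => hp s t) hs)
            ((single_le_sum (fun t _ => hp s t) ht).trans
              (single_le_sum (fun s _ => sum_nonneg fun t _ => hp s t) hs))
  have hexpand : ∑ s ∈ A, ∑ t ∈ B, p s t * (log (p s t) + log c - log (P s) - log (Q t))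
      = ∑ s ∈ A, ∑ t ∈ B, p s t * log (p s t) + c * log c
        - ∑ s ∈ A, P s * log (P s) - ∑ t ∈ B, Q t * log (Q t) := by
    simp only [mul_add, mul_sub, sum_add_distrib, sum_sub_distrib, ← sum_mul]
    rw [sum_comm (s := A) (f := fun s t => p s t * log (Q t))]
    simp only [← sum_mul]
    rfl
  simp only [negMulLog, neg_mul, sum_neg_distrib]
  linarith

end Gibbs

section EntropyInequalities

variable {Ω S T R : Type*} [Fintype Ω] {ν : Ω → ℝ}

lemma prb_eq_sum_prb_pair (ν : Ω → ℝ) (U : Ω → S) (V : Ω → T) (s : S) :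
    prb ν {ω | U ω = s} = ∑ t ∈ univ.image V, prb ν {ω | (U ω, V ω) = (s, t)} := by
  rw [prb_eq_sum_prb_inter ν V]
  refine sum_congr rfl fun t _ => congrArg (prb ν) (Set.ext fun ω => ?_)
  simp [Prod.ext_iff]

lemma ent_pair_add_negMulLog_le (hν : ∀ ω, 0 ≤ ν ω) (U : Ω → S) (V : Ω → T) :
    ent ν (fun ω => (U ω, V ω)) + negMulLog (∑ ω, ν ω) ≤ ent ν U + ent ν V := by
  have hV : ∀ t, prb ν {ω | V ω = t}
      = ∑ s ∈ univ.image U, prb ν {ω | (U ω, V ω) = (s, t)} := fun t => by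
    rw [prb_eq_sum_prb_pair ν V U]
    refine sum_congr rfl fun s _ => congrArg (prb ν) (Set.ext fun ω => ?_)
    simp [Prod.ext_iff, and_comm]
  rw [ent_eq_sum_of_forall_mem ν _ fun ω => mk_mem_image_univ_product U V ω ω, sum_product,
    ← sum_prb_image_eq_sum ν U]
  simp only [ent, prb_eq_sum_prb_pair ν U V, hV]
  exact sum_negMulLog_add_negMulLog_sum_le _ _ _ fun s t => prb_nonneg hν _

lemma ent_pair_le (hν : IsProb ν) (U : Ω → S) (V : Ω → T) :
    ent ν (fun ω => (U ω, V ω)) ≤ ent ν U + ent ν V := by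
  simpa [hν.2] using ent_pair_add_negMulLog_le hν.1 U V

lemma prb_restrict (ν : Ω → ℝ) (W : Ω → R) (z : R) (E : Set Ω) :
    prb (fun ω => if W ω = z then ν ω else 0) E = prb ν (E ∩ {ω | W ω = z}) := by
  simp [prb, sum_filter, ite_and]

lemma ent_pair_eq_sum_ent_restrict (ν : Ω → ℝ) (Y : Ω → S) (W : Ω → R) :
    ent ν (fun ω => (Y ω, W ω))
      = ∑ z ∈ univ.image W, ent (fun ω => if W ω = z then ν ω else 0) Y := by
  rw [ent_eq_sum_of_forall_mem ν _ fun ω => mk_mem_image_univ_product Y W ω ω, sum_product_right]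
  refine sum_congr rfl fun z _ => sum_congr rfl fun y _ => ?_
  rw [prb_restrict]
  congr 2
  ext ω
  simp [Prod.ext_iff]

lemma ent_submod (hν : ∀ ω, 0 ≤ ν ω) (U : Ω → S) (V : Ω → T) (W : Ω → R) :
    ent ν (fun ω => ((U ω, V ω), W ω)) + ent ν W
      ≤ ent ν (fun ω => (U ω, W ω)) + ent ν (fun ω => (V ω, W ω)) := by
  have hW : ent ν W = ∑ z ∈ univ.image W, negMulLog (∑ ω, if W ω = z then ν ω else 0) :=
    sum_congr rfl fun z _ => by rw [← prb_univ, prb_restrict, Set.univ_inter]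
  rw [ent_pair_eq_sum_ent_restrict ν (fun ω => (U ω, V ω)) W, ent_pair_eq_sum_ent_restrict ν U W,
    ent_pair_eq_sum_ent_restrict ν V W, hW, ← sum_add_distrib, ← sum_add_distrib]
  exact sum_le_sum fun z _ =>
    ent_pair_add_negMulLog_le (fun ω => by split_ifs <;> simp [hν ω]) U V

end EntropyInequalities

section Additive

variable {Ω₁ Ω₂ Ω₃ G : Type*} [Fintype Ω₁] [Fintype Ω₂] [Fintype Ω₃] [AddCommGroup G]
  {ν₁ : Ω₁ → ℝ} {ν₂ : Ω₂ → ℝ} {ν₃ : Ω₃ → ℝ}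

theorem ent_sub_add_ent_le (h₁ : IsProb ν₁) (h₂ : IsProb ν₂) (A B : Ω₁ → G) (C : Ω₂ → G) :
    ent ν₁ (fun ω => A ω - B ω) + ent ν₂ C
      ≤ ent (ν₁ ⊗ₚ ν₂) (fun p => A p.1 - C p.2) + ent (ν₁ ⊗ₚ ν₂) (fun p => B p.1 - C p.2) := by
  have hν := h₁.prod h₂
  have hUVW : ent (ν₁ ⊗ₚ ν₂) (fun p => ((A p.1 - C p.2, B p.1), A p.1 - B p.1))
      = ent ν₁ (fun ω => (A ω, B ω)) + ent ν₂ C := by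
    rw [← ent_prod_mk h₁.2 h₂.2]
    exact ent_eq_of_comp _ (fun x => ((x.2 + x.1.2, x.1.2), x.2 + x.1.2 - x.1.1))
      (fun y => ((y.1.1 - y.2, y.1.2), y.1.1 - y.1.2)) (fun _ => by simp) (fun _ => rfl)
  have hUW : ent (ν₁ ⊗ₚ ν₂) (fun p => (A p.1 - C p.2, A p.1 - B p.1))
      = ent (ν₁ ⊗ₚ ν₂) (fun p => (A p.1 - C p.2, B p.1 - C p.2)) :=
    ent_eq_of_comp _ (fun x => (x.1, x.1 - x.2)) (fun y => (y.1, y.1 - y.2))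
      (fun _ => by simp) (fun _ => by simp)
  have hVW : ent (ν₁ ⊗ₚ ν₂) (fun p => (B p.1, A p.1 - B p.1)) = ent ν₁ (fun ω => (A ω, B ω)) :=
    (ent_comp_fst h₂.2 fun ω => (B ω, A ω - B ω)).trans <| ent_eq_of_comp _
      (fun x => (x.2 + x.1, x.1)) (fun y => (y.2, y.1 - y.2)) (fun _ => by simp) (fun _ => rfl)
  have hW : ent (ν₁ ⊗ₚ ν₂) (fun p => A p.1 - B p.1) = ent ν₁ (fun ω => A ω - B ω) :=
    ent_comp_fst h₂.2 fun ω => A ω - B ω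
  linarith [ent_submod hν.1 (fun p => A p.1 - C p.2) (fun p => B p.1) (fun p => A p.1 - B p.1),
    ent_pair_le hν (fun p => A p.1 - C p.2) (fun p => B p.1 - C p.2)]

theorem ent_sub_sub_add_ent_le (h₁ : IsProb ν₁) (h₂ : IsProb ν₂) (h₃ : IsProb ν₃)
    (A : Ω₁ → G) (B : Ω₂ → G) (C : Ω₃ → G) :
    ent (fun p : (Ω₁ × Ω₂) × Ω₃ => ν₁ p.1.1 * ν₂ p.1.2 * ν₃ p.2)
        (fun p => A p.1.1 - B p.1.2 - C p.2) + ent ν₁ A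
      ≤ ent (ν₁ ⊗ₚ ν₂) (fun p => A p.1 - B p.2) + ent (ν₁ ⊗ₚ ν₃) (fun p => A p.1 - C p.2) := by
  set ν : (Ω₁ × Ω₂) × Ω₃ → ℝ := fun p => ν₁ p.1.1 * ν₂ p.1.2 * ν₃ p.2
  have h₁₂ := h₁.prod h₂
  have hν : IsProb ν := h₁₂.prod h₃
  have hUVW : ent ν (fun p => ((B p.1.2, C p.2), A p.1.1 - B p.1.2 - C p.2))
      = ent ν₁ A + ent ν₂ B + ent ν₃ C := by
    rw [← ent_prod_mk h₁.2 h₂.2, ← ent_prod_mk h₁₂.2 h₃.2]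
    exact ent_eq_of_comp _ (fun x => ((x.2 + x.1.2 + x.1.1, x.1.1), x.1.2))
      (fun y => ((y.1.2, y.2), y.1.1 - y.1.2 - y.2)) (fun _ => by simp) (fun _ => rfl)
  have hUW : ent ν (fun p => (B p.1.2, A p.1.1 - B p.1.2 - C p.2))
      = ent ν (fun p => (B p.1.2, A p.1.1 - C p.2)) :=
    ent_eq_of_comp _ (fun x => (x.1, x.2 + x.1)) (fun y => (y.1, y.2 - y.1))
      (fun _ => by simp; abel) (fun _ => by simp [sub_right_comm])
  have hVW : ent ν (fun p => (C p.2, A p.1.1 - B p.1.2 - C p.2))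
      = ent ν (fun p => (C p.2, A p.1.1 - B p.1.2)) :=
    ent_eq_of_comp _ (fun x => (x.1, x.2 + x.1)) (fun y => (y.1, y.2 - y.1))
      (fun _ => by simp) (fun _ => rfl)
  have hB : ent ν (fun p => B p.1.2) = ent ν₂ B :=
    (ent_comp_fst (ν₁ := ν₁ ⊗ₚ ν₂) h₃.2 fun q => B q.2).trans (ent_comp_snd h₁.2 B)
  have hC : ent ν (fun p => C p.2) = ent ν₃ C :=
    ent_comp_snd (ν₂ := ν₃) h₁₂.2 C
  have hAB : ent ν (fun p => A p.1.1 - B p.1.2) = ent (ν₁ ⊗ₚ ν₂) (fun p => A p.1 - B p.2) :=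
    ent_comp_fst (ν₁ := ν₁ ⊗ₚ ν₂) h₃.2 fun q => A q.1 - B q.2
  have hAC : ent ν (fun p => A p.1.1 - C p.2) = ent (ν₁ ⊗ₚ ν₃) (fun p => A p.1 - C p.2) :=
    ((prbPreserving_fst (ν₁ := ν₁) h₂.2).prodMap_id (ν₂ := ν₃)).ent_comp fun q => A q.1 - C q.2
  linarith [ent_submod hν.1 (fun p => B p.1.2) (fun p => C p.2)
      (fun p => A p.1.1 - B p.1.2 - C p.2),
    ent_pair_le hν (fun p => B p.1.2) (fun p => A p.1.1 - C p.2),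
    ent_pair_le hν (fun p => C p.2) (fun p => A p.1.1 - B p.1.2)]

theorem ent_le_ent_sub (h₁ : IsProb ν₁) (h₂ : IsProb ν₂) (A : Ω₁ → G) (C : Ω₂ → G) :
    ent ν₁ A ≤ ent (ν₁ ⊗ₚ ν₂) (fun p => A p.1 - C p.2) := by
  have hjoint : ent (ν₁ ⊗ₚ ν₂) (fun p => (A p.1 - C p.2, C p.2)) = ent ν₁ A + ent ν₂ C := by
    rw [← ent_prod_mk h₁.2 h₂.2]
    exact ent_eq_of_comp _ (fun x => (x.1 + x.2, x.2)) (fun y => (y.1 - y.2, y.2))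
      (fun _ => by simp) (fun _ => rfl)
  linarith [ent_pair_le (h₁.prod h₂) (fun p => A p.1 - C p.2) (fun p => C p.2),
    ent_comp_snd h₁.2 (ν₂ := ν₂) C]

end Additive

section Gfun

variable {Ω : Type*} [Fintype Ω] {μ : Ω → ℝ}

lemma gfun_zero (hμ : ∑ ω, μ ω = 1) (X : Ω → ℚ) : gfun μ X 0 = 0 := by
  simp [gfun, ent_comp_fst hμ]

lemma gfun_one_nonneg (hμ : IsProb μ) (X : Ω → ℚ) : 0 ≤ gfun μ X 1 := by
  simpa [gfun] using ent_le_ent_sub hμ hμ X X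

end Gfun

/-- subadditivity `g(a₁ + a₂) ≤ g(a₁) + g(a₂) + g(1)`. -/
theorem gfun_add_le {Ω : Type*} [Fintype Ω] (μ : Ω → ℝ) (hμ : IsProb μ)
    (X : Ω → ℚ) (a₁ a₂ : ℚ) :
    gfun μ X (a₁ + a₂) ≤ gfun μ X a₁ + gfun μ X a₂ + gfun μ X 1 := by
  rcases eq_or_ne a₂ 0 with rfl | ha₂
  · rw [add_zero, gfun_zero hμ.2]
    linarith [gfun_one_nonneg hμ X]
  have hruzsa := ent_sub_add_ent_le (hμ.prod hμ) hμ (fun q => X q.1 - a₁ * X q.2)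
    (fun q => a₂ * X q.2) (fun ω => a₂ * X ω)
  have hkvm := ent_sub_sub_add_ent_le hμ hμ hμ X (fun ω => a₁ * X ω) (fun ω => a₂ * X ω)
  have hscale : ent μ (fun ω => a₂ * X ω) = ent μ X :=
    ent_comp_of_injOn μ (mul_right_injective₀ ha₂).injOn
  have hdiff : ent (fun p : (Ω × Ω) × Ω => μ p.1.1 * μ p.1.2 * μ p.2)
        (fun p => a₂ * X p.1.2 - a₂ * X p.2)
      = ent (μ ⊗ₚ μ) (fun q => X q.1 - 1 * X q.2) := by
    simp only [← mul_sub, one_mul]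
    rw [ent_comp_of_injOn _ (mul_right_injective₀ ha₂).injOn]
    exact ((prbPreserving_snd (ν₂ := μ) hμ.2).prodMap_id (ν₂ := μ)).ent_comp
      fun q => X q.1 - X q.2
  have hsum : ent (μ ⊗ₚ μ) (fun q => X q.1 - a₁ * X q.2 - a₂ * X q.2)
      = ent (μ ⊗ₚ μ) (fun q => X q.1 - (a₁ + a₂) * X q.2) := by
    simp only [add_mul, sub_sub]
  simp only [gfun]
  linarith
end

section
/- (Certifying a good configuration can be assumed to have an invertible projection) Let R be a finite set of slopes, s a slope not in R, and X, Y finitely-supported ℚ-valued random variables. Then there exist random variables X', Y' and an auxiliary random variable Φ on a possibly larger probability space such that: (1) (X',Y') has the same joint distribution as (X,Y); (2) π_s(X',Y') = π_s(X,Y) almost surely; (3) for every value φ₀ in the essential range of Φ, the map π_s is injective on the essential range of ((X',Y') | Φ = φ₀); and (4) for every slope r, H[π_r(X',Y') | Φ] ≤ H[π_r(X,Y)] while H[π_s(X',Y') | Φ] = H[π_s(X,Y)]. -/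
open scoped Classical
open Finset

/-!
Write `Z = π_s(X,Y)`. Keep a sample `ω ∼ μ` and, independently, draw one point `Φ(c)` from every
fibre `{Z = c}` with the conditional law; put `(X',Y') = (X,Y)(Φ(Z ω))`. A point drawn from the
fibre of a `μ`-random point is again `μ`-distributed, so `(X',Y')` has the law of `(X,Y)`, and
`Z` of it is `Z ω` almost surely. Given `Φ`, the pair `(X',Y')` is a function of
`Z ω = π_s(X',Y')`, which is the injectivity. Conditioning does not increase entropy, and `Z ω`
is independent of `Φ`, which gives the equality for `π_s`.
-/

section Probability

variable {Ω : Type*} [Fintype Ω] {μ : Ω → ℝ}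

lemma prb_eq_sum_ite (μ : Ω → ℝ) (E : Set Ω) : prb μ E = ∑ ω, if ω ∈ E then μ ω else 0 :=
  Finset.sum_filter _ _

lemma prb_nonneg_s11 (hμ : IsProb μ) (E : Set Ω) : 0 ≤ prb μ E :=
  Finset.sum_nonneg fun ω _ => hμ.1 ω

lemma prb_mono (hμ : IsProb μ) {E E' : Set Ω} (h : E ⊆ E') : prb μ E ≤ prb μ E' :=
  Finset.sum_le_sum_of_subset_of_nonneg (fun ω hω => by simpa using h (by simpa using hω))
    fun ω _ _ => hμ.1 ω

lemma prb_eq_zero (hE : ∀ ω ∈ E, μ ω = 0) : prb μ E = 0 :=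
  Finset.sum_eq_zero fun ω hω => hE ω (Finset.mem_filter.1 hω).2

lemma exists_ne_zero_of_prb_ne_zero {E : Set Ω} (h : prb μ E ≠ 0) : ∃ ω ∈ E, μ ω ≠ 0 := by
  contrapose! h
  exact prb_eq_zero h

lemma prb_ne_zero_of_mem (hμ : IsProb μ) {E : Set Ω} {ω : Ω} (hω : ω ∈ E) (h : μ ω ≠ 0) :
    prb μ E ≠ 0 := fun h0 =>
  h ((Finset.sum_eq_zero_iff_of_nonneg fun ω _ => hμ.1 ω).1 h0 ω (by simpa using hω))

lemma prb_congr_ae {E E' : Set Ω} (h : ∀ ω, μ ω ≠ 0 → (ω ∈ E ↔ ω ∈ E')) :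
    prb μ E = prb μ E' := by
  simp only [prb_eq_sum_ite]
  refine Finset.sum_congr rfl fun ω _ => ?_
  by_cases hω : μ ω = 0
  · simp [hω]
  · simp only [h ω hω]

lemma prb_eq_zero_of_notMem_image {α : Type*} {X : Ω → α} {v : α}
    (hv : v ∉ Finset.univ.image X) : prb μ {ω | X ω = v} = 0 :=
  prb_eq_zero fun ω hω => absurd (hω ▸ Finset.mem_image_of_mem X (Finset.mem_univ ω)) hv

lemma sum_prb_inter_fiber {α : Type*} (μ : Ω → ℝ) (E : Set Ω) (W : Ω → α) :
    ∑ v ∈ Finset.univ.image W, prb μ {ω | ω ∈ E ∧ W ω = v} = prb μ E := by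
  rw [prb, ← Finset.sum_fiberwise_of_maps_to (g := W) (t := Finset.univ.image W)
    fun ω _ => Finset.mem_image_of_mem W (Finset.mem_univ ω)]
  simp only [prb, Finset.filter_filter, Set.mem_ofPred]

lemma sum_prb_fiber (hμ : IsProb μ) {α : Type*} (W : Ω → α) :
    ∑ v ∈ Finset.univ.image W, prb μ {ω | W ω = v} = 1 := by
  simpa [prb, ← hμ.2] using sum_prb_inter_fiber μ Set.univ W

lemma sum_prb_pair_eq_left {α β : Type*} (μ : Ω → ℝ) (A : Ω → α) (B : Ω → β) (a : α) :
    ∑ b ∈ Finset.univ.image B, prb μ {ω | (A ω, B ω) = (a, b)} = prb μ {ω | A ω = a} := by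
  simp only [Prod.mk.injEq]
  exact sum_prb_inter_fiber μ {ω | A ω = a} B

lemma sum_prb_pair_eq_right {α β : Type*} (μ : Ω → ℝ) (A : Ω → α) (B : Ω → β) (b : β) :
    ∑ a ∈ Finset.univ.image A, prb μ {ω | (A ω, B ω) = (a, b)} = prb μ {ω | B ω = b} := by
  simp only [Prod.mk.injEq, ← sum_prb_inter_fiber μ {ω | B ω = b} A, Set.mem_ofPred, and_comm]

end Probability

def IsMeasurePreserving {Ω' Ω : Type*} [Fintype Ω'] (U : Ω' → Ω) (μ' : Ω' → ℝ) (μ : Ω → ℝ) :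
    Prop :=
  ∀ ω, prb μ' {ω' | U ω' = ω} = μ ω

namespace IsMeasurePreserving

variable {Ω' Ω Ω'' : Type*} [Fintype Ω'] [Fintype Ω] {μ' : Ω' → ℝ} {μ : Ω → ℝ} {U : Ω' → Ω}

lemma prb_preimage (hU : IsMeasurePreserving U μ' μ) (E : Set Ω) :
    prb μ' (U ⁻¹' E) = prb μ E := by
  rw [prb, ← Finset.sum_fiberwise_of_maps_to (g := U) (t := Finset.univ.filter (· ∈ E))
    fun ω' hω' => by simpa using hω']
  refine Finset.sum_congr rfl fun ω hω => ?_
  rw [← hU ω, prb, Finset.filter_filter]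
  congr 1
  ext ω'
  simp only [Finset.mem_filter, Finset.mem_univ, true_and, Set.mem_preimage, Set.mem_ofPred_eq]
  exact ⟨And.right, fun h => ⟨h ▸ (Finset.mem_filter.1 hω).2, h⟩⟩

lemma comp {μ'' : Ω'' → ℝ} {V : Ω → Ω''} (hV : IsMeasurePreserving V μ μ'')
    (hU : IsMeasurePreserving U μ' μ) : IsMeasurePreserving (V ∘ U) μ' μ'' := fun ω'' =>
  (hU.prb_preimage {ω | V ω = ω''}).trans (hV ω'')

end IsMeasurePreserving

lemma isMeasurePreserving_equiv_symm {Ω Ω₀ : Type*} [Fintype Ω] [Fintype Ω₀] (e : Ω ≃ Ω₀)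
    (μ : Ω → ℝ) : IsMeasurePreserving e.symm (μ ∘ e.symm) μ := fun ω => by
  rw [prb_eq_sum_ite, ← e.sum_comp]
  simp [eq_comm]

section Entropy

variable {Ω : Type*} [Fintype Ω] {μ : Ω → ℝ}

lemma ent_eq_sum_of_forall_mem_s11 {α : Type*} {X : Ω → α} {t : Finset α} (ht : ∀ ω, X ω ∈ t) :
    ent μ X = ∑ v ∈ t, Real.negMulLog (prb μ {ω | X ω = v}) :=
  Finset.sum_subset (Finset.image_subset_iff.2 fun ω _ => ht ω) fun _ _ hv => by
    rw [prb_eq_zero_of_notMem_image hv, Real.negMulLog_zero]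

lemma ent_congr_law {Ω₂ α : Type*} [Fintype Ω₂] {μ₂ : Ω₂ → ℝ} {A : Ω → α} {B : Ω₂ → α}
    (h : ∀ v, prb μ {ω | A ω = v} = prb μ₂ {ω | B ω = v}) : ent μ A = ent μ₂ B := by
  have hA : ∀ ω, A ω ∈ Finset.univ.image A ∪ Finset.univ.image B := fun ω =>
    Finset.mem_union_left _ (Finset.mem_image_of_mem A (Finset.mem_univ ω))
  have hB : ∀ ω, B ω ∈ Finset.univ.image A ∪ Finset.univ.image B := fun ω =>
    Finset.mem_union_right _ (Finset.mem_image_of_mem B (Finset.mem_univ ω))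
  rw [ent_eq_sum_of_forall_mem_s11 hA, ent_eq_sum_of_forall_mem_s11 hB]
  simp only [h]

lemma ent_congr_ae {α : Type*} {A B : Ω → α} (h : ∀ ω, μ ω ≠ 0 → A ω = B ω) :
    ent μ A = ent μ B :=
  ent_congr_law fun _ => prb_congr_ae fun ω hω => by simp only [Set.mem_ofPred_eq, h ω hω]

lemma condEnt_congr_ae {α β : Type*} {A B : Ω → α} (h : ∀ ω, μ ω ≠ 0 → A ω = B ω) (Z : Ω → β) :
    condEnt μ A Z = condEnt μ B Z := by
  rw [condEnt, condEnt, ent_congr_ae fun ω hω => congrArg (·, Z ω) (h ω hω)]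

lemma IsMeasurePreserving.ent_comp {Ω' α : Type*} [Fintype Ω'] {μ' : Ω' → ℝ} {U : Ω' → Ω}
    (hU : IsMeasurePreserving U μ' μ) (W : Ω → α) : ent μ' (W ∘ U) = ent μ W :=
  ent_congr_law fun v => hU.prb_preimage {ω | W ω = v}

/-- Termwise Gibbs inequality: `log x ≥ 1 - 1/x` at `x = p / (P * Q)`. -/
lemma negMulLog_add_le {p P Q : ℝ} (hp : 0 ≤ p) (hpP : p ≤ P) (hpQ : p ≤ Q) :
    Real.negMulLog p + p ≤ p * -Real.log P + p * -Real.log Q + P * Q := by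
  rcases hp.eq_or_lt with rfl | hp
  · simpa using mul_nonneg hpP hpQ
  have hP := hp.trans_le hpP
  have hQ := hp.trans_le hpQ
  have hlog := Real.one_sub_inv_le_log_of_pos (div_pos hp (mul_pos hP hQ))
  rw [Real.log_div hp.ne' (by positivity), Real.log_mul hP.ne' hQ.ne', inv_div] at hlog
  have := mul_le_mul_of_nonneg_left hlog hp.le
  rw [mul_sub, mul_one, mul_div_cancel₀ _ hp.ne'] at this
  rw [Real.negMulLog]
  linarith

lemma ent_pair_le_s11 (hμ : IsProb μ) {α β : Type*} (A : Ω → α) (B : Ω → β) :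
    ent μ (fun ω => (A ω, B ω)) ≤ ent μ A + ent μ B := by
  set sA := Finset.univ.image A
  set sB := Finset.univ.image B
  set p : α → β → ℝ := fun a b => prb μ {ω | (A ω, B ω) = (a, b)}
  set P : α → ℝ := fun a => prb μ {ω | A ω = a}
  set Q : β → ℝ := fun b => prb μ {ω | B ω = b}
  have hpair : ent μ (fun ω => (A ω, B ω)) = ∑ a ∈ sA, ∑ b ∈ sB, Real.negMulLog (p a b) := by
    rw [ent_eq_sum_of_forall_mem_s11 (t := sA ×ˢ sB), Finset.sum_product]
    exact fun ω => Finset.mem_product.2 ⟨Finset.mem_image_of_mem A (Finset.mem_univ ω),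
      Finset.mem_image_of_mem B (Finset.mem_univ ω)⟩
  have hA : ∑ a ∈ sA, ∑ b ∈ sB, p a b * -Real.log (P a) = ent μ A := by
    refine Finset.sum_congr rfl fun a _ => ?_
    rw [← Finset.sum_mul, sum_prb_pair_eq_left, Real.negMulLog, neg_mul, mul_neg]
  have hB : ∑ a ∈ sA, ∑ b ∈ sB, p a b * -Real.log (Q b) = ent μ B := by
    rw [Finset.sum_comm]
    refine Finset.sum_congr rfl fun b _ => ?_
    rw [← Finset.sum_mul, sum_prb_pair_eq_right, Real.negMulLog, neg_mul, mul_neg]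
  have hp : ∑ a ∈ sA, ∑ b ∈ sB, p a b = 1 := by
    simp only [p, sA, sB, sum_prb_pair_eq_left, sum_prb_fiber hμ]
  have hPQ : ∑ a ∈ sA, ∑ b ∈ sB, P a * Q b = 1 := by
    simp only [P, Q, sA, sB, ← Finset.mul_sum, ← Finset.sum_mul, sum_prb_fiber hμ, one_mul]
  have key : ∑ a ∈ sA, ∑ b ∈ sB, (Real.negMulLog (p a b) + p a b)
      ≤ ∑ a ∈ sA, ∑ b ∈ sB, (p a b * -Real.log (P a) + p a b * -Real.log (Q b) + P a * Q b) :=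
    Finset.sum_le_sum fun a _ => Finset.sum_le_sum fun b _ =>
      negMulLog_add_le (prb_nonneg_s11 hμ _) (prb_mono hμ fun _ h => congrArg Prod.fst h)
        (prb_mono hμ fun _ h => congrArg Prod.snd h)
  simp only [Finset.sum_add_distrib, hA, hB, hp, hPQ, ← hpair] at key
  linarith

lemma condEnt_le_ent (hμ : IsProb μ) {α β : Type*} (A : Ω → α) (Z : Ω → β) :
    condEnt μ A Z ≤ ent μ A := by
  have := ent_pair_le_s11 hμ A Z
  rw [condEnt]
  linarith

end Entropy

def pmfProd {Ω₁ Ω₂ : Type*} (μ₁ : Ω₁ → ℝ) (μ₂ : Ω₂ → ℝ) : Ω₁ × Ω₂ → ℝ :=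
  fun q => μ₁ q.1 * μ₂ q.2

def pmfPi {ι Ω : Type*} [Fintype ι] (ν : ι → Ω → ℝ) : (ι → Ω) → ℝ :=
  fun f => ∏ i, ν i (f i)

section ProductSpaces

variable {Ω₁ Ω₂ : Type*} [Fintype Ω₁] [Fintype Ω₂] {μ₁ : Ω₁ → ℝ} {μ₂ : Ω₂ → ℝ}

lemma prb_pmfProd (μ₁ : Ω₁ → ℝ) (μ₂ : Ω₂ → ℝ) (E : Set (Ω₁ × Ω₂)) :
    prb (pmfProd μ₁ μ₂) E = ∑ a, μ₁ a * prb μ₂ {b | (a, b) ∈ E} := by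
  simp only [prb_eq_sum_ite, Fintype.sum_prod_type, Finset.mul_sum, pmfProd, Set.mem_ofPred_eq,
    mul_ite, mul_zero]

lemma prb_setOf_const (hμ : IsProb μ₂) (P : Prop) : prb μ₂ {_b | P} = if P then 1 else 0 := by
  by_cases hP : P <;> simp [prb_eq_sum_ite, hP, hμ.2]

lemma prb_setOf_eq (μ : Ω₂ → ℝ) (ω : Ω₂) : prb μ {ω' | ω' = ω} = μ ω := by
  simp [prb_eq_sum_ite]

lemma isProb_pmfProd (h₁ : IsProb μ₁) (h₂ : IsProb μ₂) : IsProb (pmfProd μ₁ μ₂) :=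
  ⟨fun q => mul_nonneg (h₁.1 q.1) (h₂.1 q.2), by
    simpa [prb, h₂.2, h₁.2] using prb_pmfProd μ₁ μ₂ Set.univ⟩

lemma isMeasurePreserving_fst (h₂ : IsProb μ₂) :
    IsMeasurePreserving Prod.fst (pmfProd μ₁ μ₂) μ₁ := fun ω => by
  simp [prb_pmfProd, prb_setOf_const h₂]

lemma isMeasurePreserving_snd (h₁ : IsProb μ₁) :
    IsMeasurePreserving Prod.snd (pmfProd μ₁ μ₂) μ₂ := fun ω => by
  simp only [prb_pmfProd, Set.mem_ofPred_eq, prb_setOf_eq, ← Finset.sum_mul, h₁.2, one_mul]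

lemma prb_pmfProd_pair {α β : Type*} (A : Ω₁ → α) (B : Ω₂ → β) (a : α) (b : β) :
    prb (pmfProd μ₁ μ₂) {q | (A q.1, B q.2) = (a, b)}
      = prb μ₁ {ω | A ω = a} * prb μ₂ {ω | B ω = b} := by
  rw [prb_pmfProd]
  simp only [Set.mem_ofPred_eq, Prod.mk.injEq, prb_eq_sum_ite, Finset.sum_mul]
  refine Finset.sum_congr rfl fun x _ => ?_
  by_cases hx : A x = a <;> simp [hx]

lemma ent_pmfProd_pair (h₁ : IsProb μ₁) (h₂ : IsProb μ₂) {α β : Type*} (A : Ω₁ → α) (B : Ω₂ → β) :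
    ent (pmfProd μ₁ μ₂) (fun q => (A q.1, B q.2)) = ent μ₁ A + ent μ₂ B := by
  rw [ent_eq_sum_of_forall_mem_s11 (t := Finset.univ.image A ×ˢ Finset.univ.image B)
      fun q => Finset.mem_product.2 ⟨Finset.mem_image_of_mem A (Finset.mem_univ _),
        Finset.mem_image_of_mem B (Finset.mem_univ _)⟩,
    Finset.sum_product]
  simp only [prb_pmfProd_pair, Real.negMulLog_mul, Finset.sum_add_distrib, ← Finset.sum_mul,
    ← Finset.mul_sum, sum_prb_fiber h₁, sum_prb_fiber h₂, one_mul, ent]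

lemma condEnt_pmfProd_fst_snd (h₁ : IsProb μ₁) (h₂ : IsProb μ₂) {α : Type*} (A : Ω₁ → α) :
    condEnt (pmfProd μ₁ μ₂) (fun q => A q.1) Prod.snd = ent μ₁ A := by
  have hpair := ent_pmfProd_pair h₁ h₂ A id
  have hsnd := (isMeasurePreserving_snd (μ₂ := μ₂) h₁).ent_comp id
  rw [condEnt]
  simp only [id, Function.comp_def] at hpair hsnd ⊢
  linarith

end ProductSpaces

section PiSpaces

variable {ι Ω : Type*} [Fintype ι] [DecidableEq ι] [Fintype Ω] {ν : ι → Ω → ℝ}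

lemma isProb_pmfPi (h : ∀ i, IsProb (ν i)) : IsProb (pmfPi ν) :=
  ⟨fun f => Finset.prod_nonneg fun i _ => (h i).1 (f i), by
    simp [pmfPi, ← Fintype.prod_sum ν, (h _).2]⟩

lemma isMeasurePreserving_eval (h : ∀ i, IsProb (ν i)) (i : ι) :
    IsMeasurePreserving (fun f => f i) (pmfPi ν) (ν i) := fun z => by
  have hsplit : ∀ f : ι → Ω, (if f i = z then pmfPi ν f else 0)
      = ∏ j, ν j (f j) * (if j = i then (if f j = z then 1 else 0) else 1) := fun f => by
    rw [Finset.prod_mul_distrib, Finset.prod_ite_eq']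
    simp [pmfPi]
  rw [prb_eq_sum_ite]
  simp only [Set.mem_ofPred_eq, hsplit]
  rw [← Fintype.prod_sum fun j y => ν j y * if j = i then (if y = z then 1 else 0) else 1]
  rw [Fintype.prod_eq_single i fun j hj => by simp [hj, (h j).2]]
  simp

end PiSpaces

section Resampling

variable {Ω γ : Type*} [Fintype Ω] {μ : Ω → ℝ}

/-- On a null fibre `condMeasure` vanishes identically; there any probability law would do. -/
noncomputable def fiberLaw (μ : Ω → ℝ) (Z : Ω → γ) (c : γ) : Ω → ℝ :=
  if prb μ {ω | Z ω = c} = 0 then μ else condMeasure μ Z c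

lemma fiberLaw_of_prb_ne_zero {Z : Ω → γ} {c : γ} (h : prb μ {ω | Z ω = c} ≠ 0) :
    fiberLaw μ Z c = condMeasure μ Z c :=
  if_neg h

lemma isProb_fiberLaw (hμ : IsProb μ) (Z : Ω → γ) (c : γ) : IsProb (fiberLaw μ Z c) := by
  by_cases h : prb μ {ω | Z ω = c} = 0
  · simpa [fiberLaw, h] using hμ
  rw [fiberLaw_of_prb_ne_zero h]
  refine ⟨fun ω => ?_, ?_⟩
  · unfold condMeasure
    split_ifs
    exacts [div_nonneg (hμ.1 ω) (prb_nonneg_s11 hμ _), le_rfl]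
  · have hdiv : ∀ ω, condMeasure μ Z c ω
        = (if ω ∈ {ω | Z ω = c} then μ ω else 0) / prb μ {ω | Z ω = c} := fun ω => by
      unfold condMeasure
      split_ifs <;> simp_all
    simp only [hdiv, ← Finset.sum_div, ← prb_eq_sum_ite, div_self h]

lemma eq_of_fiberLaw_ne_zero (hμ : IsProb μ) {Z : Ω → γ} {ω z : Ω} (hω : μ ω ≠ 0)
    (hz : fiberLaw μ Z (Z ω) z ≠ 0) : Z z = Z ω := by
  rw [fiberLaw_of_prb_ne_zero (prb_ne_zero_of_mem hμ rfl hω), condMeasure] at hz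
  by_contra h
  exact hz (if_neg h)

lemma sum_mul_fiberLaw (hμ : IsProb μ) (Z : Ω → γ) (z : Ω) :
    ∑ ω, μ ω * fiberLaw μ Z (Z ω) z = μ z := by
  set P := prb μ {ω | Z ω = Z z}
  have hterm : ∀ ω, μ ω * fiberLaw μ Z (Z ω) z
      = (if ω ∈ {ω | Z ω = Z z} then μ ω else 0) * (μ z / P) := fun ω => by
    by_cases hω : μ ω = 0
    · simp [hω]
    rw [fiberLaw_of_prb_ne_zero (prb_ne_zero_of_mem hμ rfl hω), condMeasure]
    by_cases hZ : Z ω = Z z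
    · simp [hZ, P]
    · simp [hZ, Ne.symm hZ]
  rw [Finset.sum_congr rfl fun ω _ => hterm ω, ← Finset.sum_mul, ← prb_eq_sum_ite]
  by_cases hz : μ z = 0
  · simp [hz]
  · exact mul_div_cancel₀ _ (prb_ne_zero_of_mem hμ rfl hz)

variable [DecidableEq γ]

/-- The second coordinate is the paper's `Φ`: one independent sample from each fibre of `Z`. -/
noncomputable def resampleLaw (μ : Ω → ℝ) (Z : Ω → γ) : Ω × (Set.range Z → Ω) → ℝ :=
  pmfProd μ (pmfPi fun c => fiberLaw μ Z c)

def resample (Z : Ω → γ) (q : Ω × (Set.range Z → Ω)) : Ω :=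
  q.2 ⟨Z q.1, Set.mem_range_self q.1⟩

lemma isProb_pmfPi_fiberLaw (hμ : IsProb μ) (Z : Ω → γ) :
    IsProb (pmfPi fun c : Set.range Z => fiberLaw μ Z c) :=
  isProb_pmfPi fun (c : Set.range Z) => isProb_fiberLaw hμ Z c

lemma isProb_resampleLaw (hμ : IsProb μ) (Z : Ω → γ) : IsProb (resampleLaw μ Z) :=
  isProb_pmfProd hμ (isProb_pmfPi_fiberLaw hμ Z)

lemma isMeasurePreserving_fst_resampleLaw (hμ : IsProb μ) (Z : Ω → γ) :
    IsMeasurePreserving Prod.fst (resampleLaw μ Z) μ :=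
  isMeasurePreserving_fst (isProb_pmfPi_fiberLaw hμ Z)

lemma isMeasurePreserving_resample (hμ : IsProb μ) (Z : Ω → γ) :
    IsMeasurePreserving (resample Z) (resampleLaw μ Z) μ := fun z => by
  rw [resampleLaw, prb_pmfProd, ← sum_mul_fiberLaw hμ Z z]
  exact Finset.sum_congr rfl fun ω _ =>
    congrArg (μ ω * ·) (isMeasurePreserving_eval (fun (c : Set.range Z) => isProb_fiberLaw hμ Z c)
      ⟨Z ω, Set.mem_range_self ω⟩ z)

lemma apply_resample_of_ne_zero (hμ : IsProb μ) {Z : Ω → γ} {q : Ω × (Set.range Z → Ω)}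
    (hq : resampleLaw μ Z q ≠ 0) : Z (resample Z q) = Z q.1 := by
  simp only [resampleLaw, pmfProd, pmfPi, mul_ne_zero_iff, Finset.prod_ne_zero_iff] at hq
  exact eq_of_fiberLaw_ne_zero hμ hq.1 (hq.2 ⟨Z q.1, _⟩ (Finset.mem_univ _))

lemma resample_eq_of_apply_eq (hμ : IsProb μ) {Z : Ω → γ} {q q' : Ω × (Set.range Z → Ω)}
    (hq : resampleLaw μ Z q ≠ 0) (hq' : resampleLaw μ Z q' ≠ 0) (h₂ : q.2 = q'.2)
    (hZ : Z (resample Z q) = Z (resample Z q')) : resample Z q = resample Z q' := by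
  rw [apply_resample_of_ne_zero hμ hq, apply_resample_of_ne_zero hμ hq'] at hZ
  simp only [resample, h₂, hZ]

end Resampling

theorem exists_invertible_projection_general {Ω : Type*} [Fintype Ω] (μ : Ω → ℝ) (hμ : IsProb μ)
    (s : Option ℚ) (X Y : Ω → ℚ) :
    ∃ (Ω' : Type) (_ : Fintype Ω') (μ' : Ω' → ℝ) (T : Ω' → Ω)
      (X' Y' : Ω' → ℚ) (F : Type) (Φ : Ω' → F),
      IsProb μ' ∧
      -- `T` realizes `μ` as the pushforward of `μ'`
      (∀ ω : Ω, prb μ' {ω' | T ω' = ω} = μ ω) ∧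
      -- (1) `(X',Y')` has the same joint distribution as `(X,Y)`
      (∀ q q' : ℚ, prb μ' {ω' | X' ω' = q ∧ Y' ω' = q'} = prb μ {ω | X ω = q ∧ Y ω = q'}) ∧
      -- (2) `π_s(X',Y') = π_s(X,Y)` almost surely
      prb μ' {ω' | pSlope s (X' ω', Y' ω') ≠ pSlope s (X (T ω'), Y (T ω'))} = 0 ∧
      -- (3) conditionally on any value of `Φ`, `π_s` is injective on the essential range
      (∀ (φ₀ : F) (p p' : ℚ × ℚ),
        prb μ' {ω' | (X' ω', Y' ω') = p ∧ Φ ω' = φ₀} ≠ 0 →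
        prb μ' {ω' | (X' ω', Y' ω') = p' ∧ Φ ω' = φ₀} ≠ 0 →
        pSlope s p = pSlope s p' → p = p') ∧
      -- (4) entropy inequalities
      (∀ r : Option ℚ,
        condEnt μ' (fun ω' => pSlope r (X' ω', Y' ω')) Φ ≤
          ent μ (fun ω => pSlope r (X ω, Y ω))) ∧
      condEnt μ' (fun ω' => pSlope s (X' ω', Y' ω')) Φ =
        ent μ (fun ω => pSlope s (X ω, Y ω)) := by
  -- `Ω'` must lie in `Type`, so the resampling is done on a copy of `Ω` indexed by `Fin`.
  obtain ⟨e⟩ : Nonempty (Ω ≃ Fin (Fintype.card Ω)) := ⟨Fintype.equivFin Ω⟩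
  set μ₀ := μ ∘ e.symm
  set Z₀ := fun k => pSlope s (X (e.symm k), Y (e.symm k))
  have hμ₀ : IsProb μ₀ := ⟨fun k => hμ.1 _, (e.symm.sum_comp μ).trans hμ.2⟩
  have he := isMeasurePreserving_equiv_symm e μ
  have hU := he.comp (isMeasurePreserving_resample hμ₀ Z₀)
  have hZ (q) (hq : resampleLaw μ₀ Z₀ q ≠ 0) : Z₀ (resample Z₀ q) = Z₀ q.1 :=
    apply_resample_of_ne_zero hμ₀ hq
  refine ⟨_, inferInstance, resampleLaw μ₀ Z₀, e.symm ∘ Prod.fst,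
    fun q => X (e.symm (resample Z₀ q)), fun q => Y (e.symm (resample Z₀ q)), _, Prod.snd,
    isProb_resampleLaw hμ₀ Z₀, he.comp (isMeasurePreserving_fst_resampleLaw hμ₀ Z₀),
    fun a b => hU.prb_preimage {ω | X ω = a ∧ Y ω = b},
    prb_eq_zero fun q hq => not_not.1 fun h => hq (hZ q h), ?_,
    fun r => (condEnt_le_ent (isProb_resampleLaw hμ₀ Z₀) _ _).trans
      (hU.ent_comp fun ω => pSlope r (X ω, Y ω)).le, ?_⟩
  · rintro φ₀ _ _ hp hp' hs
    obtain ⟨q, ⟨rfl, hq₂⟩, hq⟩ := exists_ne_zero_of_prb_ne_zero hp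
    obtain ⟨q', ⟨rfl, hq₂'⟩, hq'⟩ := exists_ne_zero_of_prb_ne_zero hp'
    simp only [resample_eq_of_apply_eq hμ₀ hq hq' (hq₂.trans hq₂'.symm) hs]
  · calc _ = condEnt (resampleLaw μ₀ Z₀) (fun q => Z₀ q.1) Prod.snd := condEnt_congr_ae hZ _
      _ = ent μ₀ Z₀ := condEnt_pmfProd_fst_snd hμ₀ (isProb_pmfPi_fiberLaw hμ₀ Z₀) Z₀
      _ = _ := he.ent_comp fun ω => pSlope s (X ω, Y ω)

/-- any pair `(X,Y)` can be replaced (on a larger probability space) by a pair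
`(X',Y')` with the same distribution and the same `π_s` projection almost surely, such that,
conditionally on an auxiliary variable `Φ`, the projection `π_s` is injective on the essential
range, every projection's conditional entropy does not increase, and the conditional entropy of
the `π_s` projection is unchanged. -/
theorem exists_invertible_projection {Ω : Type*} [Fintype Ω] (μ : Ω → ℝ) (hμ : IsProb μ)
    (R : Finset (Option ℚ)) (s : Option ℚ) (hs : s ∉ R) (X Y : Ω → ℚ) :
    ∃ (Ω' : Type) (_ : Fintype Ω') (μ' : Ω' → ℝ) (T : Ω' → Ω)
      (X' Y' : Ω' → ℚ) (F : Type) (Φ : Ω' → F),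
      IsProb μ' ∧
      -- `T` realizes `μ` as the pushforward of `μ'`
      (∀ ω : Ω, prb μ' {ω' | T ω' = ω} = μ ω) ∧
      -- (1) `(X',Y')` has the same joint distribution as `(X,Y)`
      (∀ q q' : ℚ, prb μ' {ω' | X' ω' = q ∧ Y' ω' = q'} = prb μ {ω | X ω = q ∧ Y ω = q'}) ∧
      -- (2) `π_s(X',Y') = π_s(X,Y)` almost surely
      prb μ' {ω' | pSlope s (X' ω', Y' ω') ≠ pSlope s (X (T ω'), Y (T ω'))} = 0 ∧
      -- (3) conditionally on any value of `Φ`, `π_s` is injective on the essential range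
      (∀ (φ₀ : F) (p p' : ℚ × ℚ),
        prb μ' {ω' | (X' ω', Y' ω') = p ∧ Φ ω' = φ₀} ≠ 0 →
        prb μ' {ω' | (X' ω', Y' ω') = p' ∧ Φ ω' = φ₀} ≠ 0 →
        pSlope s p = pSlope s p' → p = p') ∧
      -- (4) entropy inequalities
      (∀ r : Option ℚ,
        condEnt μ' (fun ω' => pSlope r (X' ω', Y' ω')) Φ ≤
          ent μ (fun ω => pSlope r (X ω, Y ω))) ∧
      condEnt μ' (fun ω' => pSlope s (X' ω', Y' ω')) Φ =
        ent μ (fun ω => pSlope s (X ω, Y ω)) :=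
  exists_invertible_projection_general μ hμ s X Y
end
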